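/- arXiv:0908.1942 — 2 statements merged into one kernel-verified Lean document; each statement's English description precedes it below -/
import Mathlib

section
/- Let λ < θ be infinite cardinals and let K be a linear subspace of ℓ²(θ) such that the restriction of the projection p_λ to K is injective (equivalently, no nonzero vector of K vanishes on all coordinates ξ < λ). Then every orthonormal family of vectors contained in K has cardinality at most λ. -/
open Cardinal

noncomputable section

/-- `ℓ²(θ)`: the complex Hilbert space of square-summable functions on the ordinal `θ.ord`
(realized as the type `θ.ord.toType`). -/
abbrev L2 (θ : Cardinal) : Type := lp (fun _ : θ.ord.ToType => ℂ) 2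

/-- A coordinate `ξ` of `ℓ²(θ)` "lies below `lam`" if the corresponding ordinal is `< lam.ord`. -/
def coordBelow (θ : Cardinal) (lam : Cardinal) (ξ : θ.ord.ToType) : Prop :=
  ((Ordinal.ToType.mk (o := θ.ord)).symm ξ : Ordinal) < lam.ord

/-!
Each member of the orthonormal family is nonzero at some coordinate `ξ < λ`; choosing one such
coordinate per vector gives a map from the family to `λ`. Its fibres are countable, because by
Bessel's inequality only countably many members of an orthonormal family have a nonzero inner
product with the basis vector `e_ξ`. Hence the family has at most `λ · ℵ₀ = λ` members.
-/

section Orthonormal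

universe u

variable {𝕜 : Type*} [RCLike 𝕜] {ι : Type u}

theorem Orthonormal.countable_setOf_inner_ne_zero {E : Type*} [NormedAddCommGroup E]
    [InnerProductSpace 𝕜 E] {v : ι → E} (hv : Orthonormal 𝕜 v) (x : E) :
    {i | inner 𝕜 (v i) x ≠ 0}.Countable := by
  simpa [Function.support] using (hv.inner_products_summable x).countable_support

theorem Orthonormal.countable_setOf_apply_ne_zero {α : Type*} {v : ι → lp (fun _ : α => 𝕜) 2}
    (hv : Orthonormal 𝕜 v) (a : α) : {i | v i a ≠ 0}.Countable := by
  classical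
  simpa [lp.inner_single_right] using hv.countable_setOf_inner_ne_zero (lp.single 2 a (1 : 𝕜))

theorem Orthonormal.mk_le_mk_mul_aleph0_of_exists_ne_zero {α : Type u}
    {v : ι → lp (fun _ : α => 𝕜) 2} (hv : Orthonormal 𝕜 v) (s : Set α)
    (hs : ∀ i, ∃ a ∈ s, v i a ≠ 0) : #ι ≤ #s * ℵ₀ := by
  choose f hfs hf using hs
  refine mk_le_mk_mul_of_mk_preimage_le (fun i => (⟨f i, hfs i⟩ : s)) fun a => ?_
  refine mk_le_aleph0_iff.2 <| Set.countable_coe_iff.2 <|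
    (hv.countable_setOf_apply_ne_zero a.1).mono ?_
  rintro i rfl
  exact hf i

end Orthonormal

theorem mk_setOf_coordBelow_le (θ lam : Cardinal) : #{ξ | coordBelow θ lam ξ} ≤ lam := by
  let toBelow (ξ : {ξ | coordBelow θ lam ξ}) : lam.ord.ToType :=
    Ordinal.ToType.mk ⟨(Ordinal.ToType.mk (o := θ.ord)).symm ξ.1, ξ.2⟩
  have toBelow_injective : Function.Injective toBelow := by
    intro a b hab
    have hval := congrArg Subtype.val ((Ordinal.ToType.mk (o := lam.ord)).injective hab)
    exact Subtype.ext <| (Ordinal.ToType.mk (o := θ.ord)).symm.injective <| Subtype.ext hval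
  calc #{ξ | coordBelow θ lam ξ} ≤ #lam.ord.ToType := mk_le_of_injective toBelow_injective
    _ = lam := by rw [mk_toType, card_ord]

theorem stmt5_general (lam θ : Cardinal) (hlam : ℵ₀ ≤ lam)
    (K : Submodule ℂ (L2 θ))
    (hinj : ∀ x ∈ K, (∀ ξ : θ.ord.ToType, coordBelow θ lam ξ → x ξ = 0) → x = 0)
    {ι : Type} (v : ι → L2 θ) (hv : Orthonormal ℂ v) (hvK : ∀ i, v i ∈ K) :
    #ι ≤ lam := by
  have hsupport : ∀ i, ∃ ξ ∈ {ξ | coordBelow θ lam ξ}, v i ξ ≠ 0 := by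
    intro i
    by_contra! h
    exact hv.ne_zero i (hinj _ (hvK i) h)
  calc #ι ≤ #{ξ | coordBelow θ lam ξ} * ℵ₀ :=
        hv.mk_le_mk_mul_aleph0_of_exists_ne_zero _ hsupport
    _ ≤ lam * ℵ₀ := by gcongr; exact mk_setOf_coordBelow_le θ lam
    _ = lam := mul_aleph0_eq hlam

/-- if `λ < θ` are infinite cardinals and `K` is a linear subspace of `ℓ²(θ)`
such that no nonzero vector of `K` vanishes on all coordinates `ξ < λ` (i.e. `p_λ` is
injective on `K`), then every orthonormal family of vectors contained in `K` has cardinality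
at most `λ`. -/
theorem stmt5 (lam θ : Cardinal) (hlam : ℵ₀ ≤ lam) (hlt : lam < θ)
    (K : Submodule ℂ (L2 θ))
    (hinj : ∀ x ∈ K, (∀ ξ : θ.ord.ToType, coordBelow θ lam ξ → x ξ = 0) → x = 0)
    {ι : Type} (v : ι → L2 θ) (hv : Orthonormal ℂ v) (hvK : ∀ i, v i ∈ K) :
    #ι ≤ lam :=
  stmt5_general lam θ hlam K hinj v hv hvK
end
end

section
/- Every complex Hilbert space H that is not separable contains a dense linear subspace K that contains no orthonormal basis of H; that is, there is no orthonormal subset S of K whose closed linear span equals H. -/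
/-!
Fix a Hilbert basis `e`. Index a countable part of it by the nodes `List Bool` of the binary
tree, and tag an uncountable part `e (g j)` injectively by branches `τ j : ℕ → Bool`. Writing
`σ↾n` for the node formed by the first `n` values of `σ`, put `b σ = ∑ₙ 2⁻ⁿ e (σ↾n)` and let `K`
be spanned by the untagged basis vectors and the vectors `e (g j) + b (τ j)`. It is dense
because every `b σ` is a limit of vectors of `K`.

Two distinct branches share only finitely many nodes, so for `y ∈ K` and all large `n`,
`⟪e (τ j↾n), y⟫ = 2⁻ⁿ ⟪e (g j), y⟫`. Hence a vector of `K` orthogonal to the countable part is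
orthogonal to every `e (g j)`. By Bessel's inequality only countably many members of an
orthonormal `S ⊆ K` fail to be orthogonal to the countable part, and each of them fails to be
orthogonal to only countably many `e (g j)`; any other `e (g j)` is orthogonal to all of `S`,
so the span of `S` is not dense.
-/

open Filter Function Set Submodule
open scoped InnerProductSpace

section HilbertSpace

variable {𝕜 E ι κ : Type*} [RCLike 𝕜] [NormedAddCommGroup E] [InnerProductSpace 𝕜 E]
  {v : ι → E}

theorem Orthonormal.countable_inner_ne_zero (hv : Orthonormal 𝕜 v) (x : E) :
    {i | ⟪v i, x⟫_𝕜 ≠ 0}.Countable :=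
  (hv.inner_products_summable x).countable_support.mono fun i hi => by simpa using hi

theorem Orthonormal.inner_tsum_smul_eq_zero (hv : Orthonormal 𝕜 v) {a : κ → ι} {c : κ → 𝕜}
    (hc : Summable fun n => c n • v (a n)) {i : ι} (hi : i ∉ range a) :
    ⟪v i, ∑' n, c n • v (a n)⟫_𝕜 = 0 := by
  rw [← innerSL_apply_apply, (innerSL 𝕜 (v i)).map_tsum hc]
  simp [hv.inner_eq_zero (fun h => hi ⟨_, h.symm⟩)]

theorem Orthonormal.inner_tsum_smul_self (hv : Orthonormal 𝕜 v) {a : κ → ι} (ha : Injective a)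
    {c : κ → 𝕜} (hc : Summable fun n => c n • v (a n)) (m : κ) :
    ⟪v (a m), ∑' n, c n • v (a n)⟫_𝕜 = c m := by
  rw [← innerSL_apply_apply, (innerSL 𝕜 _).map_tsum hc, tsum_eq_single m]
  · simp [hv.1]
  · intro n hn
    simp [hv.inner_eq_zero (ha.ne hn.symm)]

theorem HilbertBasis.separableSpace [Countable ι] (b : HilbertBasis ι 𝕜 E) :
    TopologicalSpace.SeparableSpace E := by
  rw [← TopologicalSpace.isSeparable_univ_iff, ← Submodule.top_coe (R := 𝕜), ← b.dense_span,
    Submodule.topologicalClosure_coe]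
  exact (countable_range b).isSeparable.span.closure

theorem Submodule.topologicalClosure_span_ne_top [CompleteSpace E] {C : Set E} (hC : C.Countable)
    {J : Type*} [Uncountable J] {v : J → E} (hv : Orthonormal 𝕜 v) {S : Set E}
    (hS : Orthonormal 𝕜 ((↑) : S → E))
    (hSC : ∀ s ∈ S, (∀ x ∈ C, ⟪x, s⟫_𝕜 = 0) → ∀ j, ⟪v j, s⟫_𝕜 = 0) :
    (span 𝕜 S).topologicalClosure ≠ ⊤ := by
  set T : Set S := ⋃ x ∈ C, {s | ⟪(s : E), x⟫_𝕜 ≠ 0}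
  have hT : T.Countable := hC.biUnion fun x _ => hS.countable_inner_ne_zero x
  have hbad : (⋃ s ∈ T, {j | ⟪v j, (s : E)⟫_𝕜 ≠ 0}).Countable :=
    hT.biUnion fun s _ => hv.countable_inner_ne_zero s
  have hbad_ne : (⋃ s ∈ T, {j | ⟪v j, (s : E)⟫_𝕜 ≠ 0}) ≠ univ := fun h =>
    not_countable_univ (h ▸ hbad)
  obtain ⟨j, hj⟩ := (ne_univ_iff_exists_notMem _).mp hbad_ne
  have hvj : ∀ s ∈ S, ⟪v j, s⟫_𝕜 = 0 := by
    intro s hs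
    by_cases hsT : (⟨s, hs⟩ : S) ∈ T
    · by_contra h
      exact hj (mem_iUnion₂.mpr ⟨_, hsT, h⟩)
    · refine hSC s hs (fun x hx => ?_) j
      by_contra h
      exact hsT (mem_biUnion hx (inner_eq_zero_symm.not.mp h))
  rw [Ne, topologicalClosure_eq_top_iff]
  intro h
  have hortho : span 𝕜 {v j} ⟂ span 𝕜 S := isOrtho_span.mpr (by simpa using hvj)
  have hvj_mem := hortho (mem_span_singleton_self (v j))
  rw [h] at hvj_mem
  exact hv.ne_zero j hvj_mem

end HilbertSpace

open Cardinal in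
theorem Set.exists_uncountable_subset_embedding {α β : Type*} [Uncountable β] {s : Set α}
    (hs : ¬ s.Countable) : ∃ t ⊆ s, Uncountable t ∧ Nonempty (t ↪ β) := by
  obtain ⟨t, hts, ht⟩ := le_mk_iff_exists_subset.mp
    (aleph_one_le_iff.mpr (aleph0_lt_mk_iff.mpr (not_countable_iff.mp hs)))
  refine ⟨t, hts, aleph0_lt_mk_iff.mp (ht ▸ aleph0_lt_aleph_one), lift_mk_le'.mp ?_⟩
  simp [ht, aleph_one_le_iff]

open Cardinal in
instance : Uncountable (ℕ → Bool) := by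
  rw [← aleph0_lt_mk_iff, ← power_def, mk_bool, mk_nat]
  exact cantor ℵ₀

def binaryPrefix (σ : ℕ → Bool) (n : ℕ) : List Bool := (List.range n).map σ

theorem binaryPrefix_injective (σ : ℕ → Bool) : Injective (binaryPrefix σ) := fun m n h => by
  simpa [binaryPrefix] using congrArg List.length h

theorem eventually_binaryPrefix_notMem_range {σ σ' : ℕ → Bool} (h : σ ≠ σ') :
    ∀ᶠ n in atTop, binaryPrefix σ n ∉ range (binaryPrefix σ') := by
  obtain ⟨k, hk⟩ := Function.ne_iff.mp h
  filter_upwards [eventually_gt_atTop k] with n hn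
  rintro ⟨m, hm⟩
  obtain rfl : m = n := by simpa [binaryPrefix] using congrArg List.length hm
  exact hk ((List.map_inj_left.mp hm.symm) k (List.mem_range.mpr hn))

section Construction

variable (𝕜 : Type*) {H ι J : Type*} [RCLike 𝕜] [NormedAddCommGroup H] [InnerProductSpace 𝕜 H]
  (e : ι → H) (f : List Bool → ι) (g : J → ι) (τ : J → ℕ → Bool)

noncomputable def branchVector (σ : ℕ → Bool) : H :=
  ∑' n, (2⁻¹ : 𝕜) ^ n • e (f (binaryPrefix σ n))

def perturbedSpan : Submodule 𝕜 H :=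
  span 𝕜 (e '' (range g)ᶜ ∪ range fun j => e (g j) + branchVector 𝕜 e f (τ j))

variable {𝕜 e f g τ} [CompleteSpace H]

theorem summable_branchVector (he : Orthonormal 𝕜 e) (σ : ℕ → Bool) :
    Summable fun n => (2⁻¹ : 𝕜) ^ n • e (f (binaryPrefix σ n)) := by
  refine Summable.of_norm ?_
  simpa [norm_smul, he.1] using summable_geometric_two

theorem inner_branchVector_binaryPrefix (he : Orthonormal 𝕜 e) (hf : Injective f)
    (σ : ℕ → Bool) (n : ℕ) :
    ⟪e (f (binaryPrefix σ n)), branchVector 𝕜 e f σ⟫_𝕜 = (2⁻¹ : 𝕜) ^ n :=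
  he.inner_tsum_smul_self (hf.comp (binaryPrefix_injective σ)) (summable_branchVector he σ) n

theorem inner_branchVector_eq_zero (he : Orthonormal 𝕜 e) {σ : ℕ → Bool} {k : ι}
    (hk : k ∉ range (f ∘ binaryPrefix σ)) : ⟪e k, branchVector 𝕜 e f σ⟫_𝕜 = 0 :=
  he.inner_tsum_smul_eq_zero (summable_branchVector he σ) hk

theorem dense_perturbedSpan (he : Orthonormal 𝕜 e)
    (hdense : (span 𝕜 (range e)).topologicalClosure = ⊤) (hfg : ∀ p j, f p ≠ g j) :
    Dense (perturbedSpan 𝕜 e f g τ : Set H) := by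
  set K := perturbedSpan 𝕜 e f g τ
  have hfK : ∀ p, e (f p) ∈ K := fun p =>
    subset_span (Or.inl ⟨f p, fun ⟨j, hj⟩ => hfg p j hj.symm, rfl⟩)
  have hbK : ∀ σ, branchVector 𝕜 e f σ ∈ K.topologicalClosure := fun σ =>
    K.isClosed_topologicalClosure.mem_of_tendsto (summable_branchVector he σ).hasSum
      (Eventually.of_forall fun s => K.le_topologicalClosure
        (sum_mem fun n _ => K.smul_mem _ (hfK _)))
  have heK : ∀ k, e k ∈ K.topologicalClosure := by
    intro k
    by_cases hk : k ∈ range g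
    · obtain ⟨j, rfl⟩ := hk
      have hj : e (g j) + branchVector 𝕜 e f (τ j) ∈ K := subset_span (Or.inr ⟨j, rfl⟩)
      simpa using sub_mem (K.le_topologicalClosure hj) (hbK (τ j))
    · exact K.le_topologicalClosure (subset_span (Or.inl ⟨k, hk, rfl⟩))
  rw [dense_iff_topologicalClosure_eq_top, eq_top_iff, ← hdense]
  exact topologicalClosure_minimal _ (span_le.mpr (range_subset_iff.mpr heK))
    K.isClosed_topologicalClosure

theorem eventually_inner_binaryPrefix (he : Orthonormal 𝕜 e) (hf : Injective f)
    (hg : Injective g) (hτ : Injective τ) (hfg : ∀ p j, f p ≠ g j) (j : J) {y : H}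
    (hy : y ∈ perturbedSpan 𝕜 e f g τ) :
    ∀ᶠ n in atTop, ⟪e (f (binaryPrefix (τ j) n)), y⟫_𝕜 = (2⁻¹ : 𝕜) ^ n * ⟪e (g j), y⟫_𝕜 := by
  induction hy using span_induction with
  | mem y hy =>
    rcases hy with ⟨k, hk, rfl⟩ | ⟨j', rfl⟩
    · have hne : ∀ᶠ n in atTop, f (binaryPrefix (τ j) n) ≠ k := by
        rw [← Nat.cofinite_eq_atTop]
        exact (hf.comp (binaryPrefix_injective _)).tendsto_cofinite.eventually
          (eventually_cofinite_ne k)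
      filter_upwards [hne] with n hn
      rw [he.inner_eq_zero hn, he.inner_eq_zero fun h => hk ⟨j, h⟩, mul_zero]
    · have hgb : ⟪e (g j), branchVector 𝕜 e f (τ j')⟫_𝕜 = 0 :=
        inner_branchVector_eq_zero he fun ⟨n, hn⟩ => hfg _ _ hn
      simp only [inner_add_right, he.inner_eq_zero (hfg _ _), hgb, zero_add, add_zero]
      rcases eq_or_ne j j' with rfl | hjj'
      · simp [inner_branchVector_binaryPrefix he hf, he.1]
      · filter_upwards [eventually_binaryPrefix_notMem_range (hτ.ne hjj')] with n hn
        rw [inner_branchVector_eq_zero he fun ⟨m, hm⟩ => hn ⟨m, hf hm⟩,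
          he.inner_eq_zero (hg.ne hjj'), mul_zero]
  | zero => simp
  | add y z _ _ hy hz =>
    filter_upwards [hy, hz] with n hy hz
    rw [inner_add_right, inner_add_right, hy, hz, mul_add]
  | smul c y _ hy =>
    filter_upwards [hy] with n hy
    rw [inner_smul_right, inner_smul_right, hy, mul_left_comm]

theorem inner_eq_zero_of_mem_perturbedSpan (he : Orthonormal 𝕜 e) (hf : Injective f)
    (hg : Injective g) (hτ : Injective τ) (hfg : ∀ p j, f p ≠ g j) {y : H}
    (hy : y ∈ perturbedSpan 𝕜 e f g τ) (hyf : ∀ p, ⟪e (f p), y⟫_𝕜 = 0) (j : J) :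
    ⟪e (g j), y⟫_𝕜 = 0 := by
  obtain ⟨n, hn⟩ := (eventually_inner_binaryPrefix he hf hg hτ hfg j hy).exists
  simpa [hyf] using hn.symm

end Construction

/-- every non-separable complex Hilbert space `H` contains a dense linear
subspace `K` containing no orthonormal basis of `H`: there is no orthonormal subset `S ⊆ K`
whose closed linear span is all of `H`. -/
theorem stmt9 {H : Type*} [NormedAddCommGroup H] [InnerProductSpace ℂ H] [CompleteSpace H]
    (hns : ¬ TopologicalSpace.SeparableSpace H) :
    ∃ K : Submodule ℂ H, Dense (K : Set H) ∧
      ¬ ∃ S : Set H, S ⊆ (K : Set H) ∧ Orthonormal ℂ (fun s : S => (s : H)) ∧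
        (Submodule.span ℂ S).topologicalClosure = ⊤ := by
  obtain ⟨w, b, -⟩ := exists_hilbertBasis ℂ H
  have : Uncountable w := not_countable_iff.mp fun _ => hns b.separableSpace
  let f : List Bool ↪ w := (Encodable.encode' _).trans (Infinite.natEmbedding w)
  obtain ⟨t, htf, ht, ⟨τ⟩⟩ := exists_uncountable_subset_embedding (β := ℕ → Bool)
    (s := (range f)ᶜ) fun h => not_countable_univ (by simpa using (countable_range f).union h)
  have hfg : ∀ p (j : t), f p ≠ j := fun p j h => htf j.2 ⟨p, h⟩
  refine ⟨perturbedSpan ℂ b f (↑) τ, dense_perturbedSpan b.orthonormal b.dense_span hfg, ?_⟩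
  rintro ⟨S, hSK, hS, hSd⟩
  refine topologicalClosure_span_ne_top (countable_range (b ∘ f))
    (b.orthonormal.comp ((↑) : t → w) Subtype.val_injective) hS ?_ hSd
  rintro s hs hsf j
  exact inner_eq_zero_of_mem_perturbedSpan b.orthonormal f.injective Subtype.val_injective
    τ.injective hfg (hSK hs) (fun p => hsf _ ⟨p, rfl⟩) j
end
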